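/- (Fano's inequality) Let t be a random variable taking values in a finite set V with |V| ≥ 2, let E be another random variable, and let f be any function of E with error probability P_e = P[f(E) ≠ t]. Then H(t|E) ≤ H_b(P_e) + P_e·log(|V|−1), where H_b(p) = −p log p − (1−p) log(1−p). -/

import Mathlib

open Real Finset
open scoped Classical BigOperators

/-- Probability of an event under a pmf `μ` on a finite sample space. -/
noncomputable def pr {Ω : Type*} [Fintype Ω] (μ : Ω → ℝ) (s : Set Ω) : ℝ :=
  ∑ ω, if ω ∈ s then μ ω else 0

/-- `μ` is a probability mass function on the finite sample space `Ω`. -/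
def IsPMF {Ω : Type*} [Fintype Ω] (μ : Ω → ℝ) : Prop :=
  (∀ ω, 0 ≤ μ ω) ∧ ∑ ω, μ ω = 1

/-- Shannon entropy of a discrete random variable `X`. -/
noncomputable def ent {Ω α : Type*} [Fintype Ω] [Fintype α] (μ : Ω → ℝ) (X : Ω → α) : ℝ :=
  ∑ a, Real.negMulLog (pr μ {ω | X ω = a})

/-- Conditional Shannon entropy `H(X|Y) = H(X,Y) - H(Y)`. -/
noncomputable def condEnt {Ω α β : Type*} [Fintype Ω] [Fintype α] [Fintype β]
    (μ : Ω → ℝ) (X : Ω → α) (Y : Ω → β) : ℝ :=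
  ent μ (fun ω => (X ω, Y ω)) - ent μ Y

/-- Mutual information `I(X;Y) = H(X) - H(X|Y)`. -/
noncomputable def mutualInfo {Ω α β : Type*} [Fintype Ω] [Fintype α] [Fintype β]
    (μ : Ω → ℝ) (X : Ω → α) (Y : Ω → β) : ℝ :=
  ent μ X - condEnt μ X Y

/-!
Compare the joint law `p(v, e)` of `(t, E)` with the conditional law `r(v | e)` that gives mass
`1 - P_e` to the guess `f e` and `P_e / (|V| - 1)` to each other value. Gibbs' inequality yields
`H(t|E) ≤ -∑ p(v, e) log r(v | e)`, and as `r(v | e)` only depends on whether `v = f e`, the right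
side is `-(1 - P_e) log (1 - P_e) - P_e log (P_e / (|V| - 1)) = H_b(P_e) + P_e log (|V| - 1)`.
-/

section Probability

variable {Ω : Type*} [Fintype Ω]

theorem pr_nonneg {μ : Ω → ℝ} (hμ : ∀ ω, 0 ≤ μ ω) (s : Set Ω) : 0 ≤ pr μ s :=
  Finset.sum_nonneg fun ω _ => by split_ifs <;> simp [hμ ω]

theorem pr_mono {μ : Ω → ℝ} (hμ : ∀ ω, 0 ≤ μ ω) {s s' : Set Ω} (h : s ⊆ s') :
    pr μ s ≤ pr μ s' :=
  Finset.sum_le_sum fun ω _ => by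
    by_cases hs : ω ∈ s
    · simp [hs, h hs]
    · by_cases hs' : ω ∈ s' <;> simp [hs, hs', hμ ω]

theorem sum_mul_ite_mem (μ : Ω → ℝ) (s : Set Ω) [DecidablePred (· ∈ s)] (A B : ℝ) :
    ∑ ω, μ ω * (if ω ∈ s then A else B) = pr μ s * A + pr μ sᶜ * B := by
  simp only [pr, Finset.sum_mul, ← Finset.sum_add_distrib]
  refine Finset.sum_congr rfl fun ω _ => ?_
  by_cases hs : ω ∈ s <;> simp [hs]

theorem pr_add_pr_compl (μ : Ω → ℝ) (s : Set Ω) : pr μ s + pr μ sᶜ = ∑ ω, μ ω := by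
  simpa using (sum_mul_ite_mem μ s 1 1).symm

theorem sum_pr_mul {α : Type*} [Fintype α] (μ : Ω → ℝ) (X : Ω → α) (g : α → ℝ) :
    ∑ a, pr μ {ω | X ω = a} * g a = ∑ ω, μ ω * g (X ω) := by
  simp only [pr, Finset.sum_mul, Set.mem_ofPred_eq, ite_mul, zero_mul]
  rw [Finset.sum_comm]
  simp

theorem sum_pr {α : Type*} [Fintype α] (μ : Ω → ℝ) (X : Ω → α) :
    ∑ a, pr μ {ω | X ω = a} = ∑ ω, μ ω := by
  simpa using sum_pr_mul μ X fun _ => 1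

end Probability

theorem condEnt_eq_sum {Ω α β : Type*} [Fintype Ω] [Fintype α] [Fintype β]
    (μ : Ω → ℝ) (X : Ω → α) (Y : Ω → β) :
    condEnt μ X Y = ∑ a : α × β, (negMulLog (pr μ {ω | (X ω, Y ω) = a}) +
      pr μ {ω | (X ω, Y ω) = a} * log (pr μ {ω | Y ω = a.2})) := by
  have hY : ent μ Y = -∑ a : α × β, pr μ {ω | (X ω, Y ω) = a} * log (pr μ {ω | Y ω = a.2}) := by
    rw [sum_pr_mul μ (fun ω => (X ω, Y ω)) fun a => log (pr μ {ω | Y ω = a.2}),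
      ← sum_pr_mul μ Y fun b => log (pr μ {ω | Y ω = b}), ent, ← Finset.sum_neg_distrib]
    simp only [negMulLog, neg_mul]
  rw [condEnt, hY, ent, sub_neg_eq_add, Finset.sum_add_distrib]

theorem negMulLog_add_mul_log_le {p q : ℝ} (hp : 0 ≤ p) (hq : 0 ≤ q) (hpq : 0 < p → 0 < q) :
    negMulLog p + p * log q ≤ q - p := by
  rcases hp.eq_or_lt with rfl | hp
  · simpa using hq
  calc negMulLog p + p * log q = p * log (q / p) := by
        rw [negMulLog, log_div (hpq hp).ne' hp.ne']; ring
    _ ≤ p * (q / p - 1) := by gcongr; exact log_le_sub_one_of_pos (div_pos (hpq hp) hp)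
    _ = q - p := by field_simp

theorem sum_negMulLog_le {ι : Type*} [Fintype ι] {p q : ι → ℝ} (hp : ∀ i, 0 ≤ p i)
    (hq : ∀ i, 0 ≤ q i) (hpq : ∀ i, 0 < p i → 0 < q i) (hsum : ∑ i, q i ≤ ∑ i, p i) :
    ∑ i, negMulLog (p i) ≤ -∑ i, p i * log (q i) := by
  have := Finset.sum_le_sum fun i (_ : i ∈ Finset.univ) =>
    negMulLog_add_mul_log_le (hp i) (hq i) (hpq i)
  rw [Finset.sum_add_distrib, Finset.sum_sub_distrib] at this
  linarith

theorem condEnt_le_neg_sum_mul_log {Ω α β : Type*} [Fintype Ω] [Fintype α] [Fintype β]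
    {μ : Ω → ℝ} (hμ : ∀ ω, 0 ≤ μ ω) (X : Ω → α) (Y : Ω → β) {r : α × β → ℝ}
    (hr : ∀ a, 0 ≤ r a) (hr_sum : ∀ y, ∑ x, r (x, y) = 1)
    (hr_pos : ∀ a, 0 < pr μ {ω | (X ω, Y ω) = a} → 0 < r a) :
    condEnt μ X Y ≤ -∑ a, pr μ {ω | (X ω, Y ω) = a} * log (r a) := by
  set p : α × β → ℝ := fun a => pr μ {ω | (X ω, Y ω) = a}
  set pY : β → ℝ := fun y => pr μ {ω | Y ω = y}
  have hp_le : ∀ a, p a ≤ pY a.2 := fun a =>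
    pr_mono hμ fun ω (h : (X ω, Y ω) = a) => show Y ω = a.2 by rw [← h]
  have hq_sum : ∑ a, pY a.2 * r a = ∑ a, p a := by
    rw [Fintype.sum_prod_type_right]
    simp only [← Finset.mul_sum, hr_sum, mul_one]
    exact (sum_pr μ Y).trans (sum_pr μ _).symm
  have hgibbs := sum_negMulLog_le (p := p) (q := fun a => pY a.2 * r a) (fun a => pr_nonneg hμ _)
    (fun a => mul_nonneg (pr_nonneg hμ _) (hr a))
    (fun a ha => mul_pos (ha.trans_le (hp_le a)) (hr_pos a ha)) hq_sum.le
  have hlog_mul : ∀ a, p a * log (pY a.2 * r a) = p a * log (pY a.2) + p a * log (r a) := by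
    intro a
    have hpa : 0 ≤ p a := pr_nonneg hμ _
    rcases hpa.eq_or_lt with ha | ha
    · rw [← ha, zero_mul, zero_mul, zero_mul, add_zero]
    · rw [log_mul (ha.trans_le (hp_le a)).ne' (hr_pos a ha).ne', mul_add]
  simp only [hlog_mul, Finset.sum_add_distrib] at hgibbs
  rw [condEnt_eq_sum, Finset.sum_add_distrib]
  linarith

section FanoKernel

variable {α β : Type*} [Fintype α] (f : β → α) (P : ℝ)

noncomputable def fanoKernel (a : α × β) : ℝ :=
  if a.1 = f a.2 then 1 - P else P / (Fintype.card α - 1)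

variable {f P}

theorem fanoKernel_nonneg (hP₀ : 0 ≤ P) (hP₁ : P ≤ 1) (a : α × β) : 0 ≤ fanoKernel f P a := by
  have : Nonempty α := ⟨a.1⟩
  have hcard : (1 : ℝ) ≤ Fintype.card α := Nat.one_le_cast.2 Fintype.card_pos
  unfold fanoKernel
  split_ifs
  · linarith
  · exact div_nonneg hP₀ (by linarith)

theorem sum_fanoKernel (hα : 2 ≤ Fintype.card α) (y : β) : ∑ x, fanoKernel f P (x, y) = 1 := by
  have hcard : (Fintype.card α : ℝ) - 1 ≠ 0 := by
    have : (2 : ℝ) ≤ Fintype.card α := by exact_mod_cast hα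
    linarith
  have : ∀ x, fanoKernel f P (x, y) =
      P / (Fintype.card α - 1) + if x = f y then 1 - P - P / (Fintype.card α - 1) else 0 := by
    intro x
    unfold fanoKernel
    split_ifs <;> ring
  simp only [this, Finset.sum_add_distrib, Finset.sum_const, Finset.sum_ite_eq',
    Finset.mem_univ, if_true, Finset.card_univ, nsmul_eq_mul]
  field_simp
  ring

theorem fanoKernel_pos {Ω : Type*} [Fintype Ω] {μ : Ω → ℝ} (hμ : IsPMF μ) (t : Ω → α)
    (E : Ω → β) (a : α × β) (ha : 0 < pr μ {ω | (t ω, E ω) = a}) :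
    0 < fanoKernel f (pr μ {ω | f (E ω) ≠ t ω}) a := by
  obtain ⟨v, e⟩ := a
  unfold fanoKernel
  split_ifs with hv
  · have hle := pr_mono hμ.1 (s := {ω | (t ω, E ω) = (v, e)})
      (s' := {ω | f (E ω) ≠ t ω}ᶜ) fun ω h => by simp_all
    linarith [pr_add_pr_compl μ {ω | f (E ω) ≠ t ω}, hμ.2]
  · have hle := pr_mono hμ.1 (s := {ω | (t ω, E ω) = (v, e)})
      (s' := {ω | f (E ω) ≠ t ω}) fun ω h => by simp_all [eq_comm]
    have hcard : (1 : ℝ) < Fintype.card α :=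
      Nat.one_lt_cast.2 (Fintype.one_lt_card_iff.2 ⟨v, f e, hv⟩)
    exact div_pos (ha.trans_le hle) (by linarith)

end FanoKernel

/-- Fano's inequality: `H(t|E) ≤ H_b(P_e) + P_e·log(|V|−1)` where
`P_e = P[f(E) ≠ t]`. -/
theorem fano_inequality {Ω V F : Type*} [Fintype Ω] [Fintype V] [Fintype F]
    (μ : Ω → ℝ) (hμ : IsPMF μ) (hV : 2 ≤ Fintype.card V)
    (t : Ω → V) (E : Ω → F) (f : F → V) :
    condEnt μ t E ≤
      Real.binEntropy (pr μ {ω | f (E ω) ≠ t ω}) +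
        pr μ {ω | f (E ω) ≠ t ω} * Real.log (Fintype.card V - 1) := by
  set Pe := pr μ {ω | f (E ω) ≠ t ω}
  have hPe_compl : pr μ {ω | f (E ω) ≠ t ω}ᶜ = 1 - Pe := by
    linarith [pr_add_pr_compl μ {ω | f (E ω) ≠ t ω}, hμ.2]
  have hPe₀ : 0 ≤ Pe := pr_nonneg hμ.1 _
  have hPe₁ : Pe ≤ 1 := by linarith [pr_nonneg hμ.1 {ω | f (E ω) ≠ t ω}ᶜ]
  have hV₁ : (0 : ℝ) < Fintype.card V - 1 := by
    have : (2 : ℝ) ≤ Fintype.card V := by exact_mod_cast hV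
    linarith
  calc condEnt μ t E ≤ -∑ a, pr μ {ω | (t ω, E ω) = a} * log (fanoKernel f Pe a) :=
        condEnt_le_neg_sum_mul_log hμ.1 t E (fanoKernel_nonneg hPe₀ hPe₁) (sum_fanoKernel hV)
          (fanoKernel_pos hμ t E)
    _ = -(Pe * log (Pe / (Fintype.card V - 1)) + (1 - Pe) * log (1 - Pe)) := by
        have hlog : ∀ ω, log (fanoKernel f Pe (t ω, E ω)) = if ω ∈ {ω | f (E ω) ≠ t ω}
            then log (Pe / (Fintype.card V - 1)) else log (1 - Pe) := fun ω => by
          by_cases h : t ω = f (E ω) <;> simp [fanoKernel, h, eq_comm]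
        rw [sum_pr_mul μ (fun ω => (t ω, E ω)), Finset.sum_congr rfl fun ω _ => by rw [hlog],
          sum_mul_ite_mem, hPe_compl]
    _ = binEntropy Pe + Pe * log (Fintype.card V - 1) := by
        rw [binEntropy_eq_negMulLog_add_negMulLog_one_sub, negMulLog, negMulLog]
        rcases hPe₀.eq_or_lt with h | h
        · simp [← h]
        · rw [log_div h.ne' hV₁.ne']
          ring
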